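/- arXiv:1307.0158 — 4 statements merged into one kernel-verified Lean document; each statement's English description precedes it below -/
import Mathlib

section
/- The sets A = {n ∈ ℕ : ∃ k m, n + 2 = 4^k * (8m + 1)} and B = {n ∈ ℕ : ∃ k, 3n + 10 = 4^k} satisfy: B is infinite and A ∩ B = {2}. -/
/-!
If `3n + 10 = 4^k` then `k ≥ 2`, so `3(n + 2) = 16·4^(k-2) - 4` and `n + 2 ≡ 4 (mod 16)`.
A number `4^j (8m + 1)` is `≡ 4 (mod 16)` only for `j = 1`, and then `16(6m + 1) = 4^k` forces the odd
factor `6m + 1` to be `1`, i.e. `n = 2`. Infinitude holds because `n ↦ 4n + 10` maps solutions of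
`3n + 10 = 4^k` to solutions with `k + 1`.
-/

theorem Set.infinite_of_mapsTo_of_forall_lt {α : Type*} [LinearOrder α] {s : Set α}
    (hne : s.Nonempty) {f : α → α} (hf : Set.MapsTo f s s) (hlt : ∀ x ∈ s, x < f x) :
    s.Infinite := by
  intro hfin
  obtain ⟨x, hx, hmax⟩ := Set.exists_max_image s id hfin hne
  exact (hlt x hx).not_ge (hmax _ (hf hx))

theorem three_mul_four_mul_add_ten_add_ten {n k : ℕ} (h : 3 * n + 10 = 4 ^ k) :
    3 * (4 * n + 10) + 10 = 4 ^ (k + 1) := by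
  rw [pow_succ]
  omega

theorem exists_three_mul_add_ten_eq_sixteen_mul_four_pow {n k : ℕ} (h : 3 * n + 10 = 4 ^ k) :
    ∃ i, 3 * n + 10 = 16 * 4 ^ i := by
  rcases k with _ | _ | i
  · simp at h
  · simp at h
  · exact ⟨i, by rw [h, pow_add]; ring⟩

theorem eq_one_of_four_pow_mul_mod_sixteen_eq_four {j m : ℕ} (h : 4 ^ j * (8 * m + 1) % 16 = 4) :
    j = 1 := by
  rcases j with _ | _ | j
  · omega
  · rfl
  · rw [show 4 ^ (j + 2) * (8 * m + 1) = 16 * (4 ^ j * (8 * m + 1)) by ring] at h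
    omega

theorem eq_two_of_three_mul_add_ten_eq_four_pow {n k j m : ℕ} (hB : 3 * n + 10 = 4 ^ k)
    (hA : n + 2 = 4 ^ j * (8 * m + 1)) : n = 2 := by
  obtain ⟨i, hi⟩ := exists_three_mul_add_ten_eq_sixteen_mul_four_pow hB
  obtain rfl : j = 1 := eq_one_of_four_pow_mul_mod_sixteen_eq_four (m := m) (by omega)
  rcases i with _ | i
  · omega
  · rw [pow_succ] at hi
    omega

theorem stmt_1 :
    {n : ℕ | ∃ k : ℕ, 3 * n + 10 = 4 ^ k}.Infinite ∧
    {n : ℕ | ∃ k m : ℕ, n + 2 = 4 ^ k * (8 * m + 1)} ∩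
      {n : ℕ | ∃ k : ℕ, 3 * n + 10 = 4 ^ k} = {2} := by
  refine ⟨Set.infinite_of_mapsTo_of_forall_lt (f := fun n ↦ 4 * n + 10) ⟨2, 2, rfl⟩
    (fun _ ⟨k, hk⟩ ↦ ⟨k + 1, three_mul_four_mul_add_ten_add_ten hk⟩) (fun _ _ ↦ by omega), ?_⟩
  ext n
  constructor
  · rintro ⟨⟨j, m, hA⟩, k, hB⟩
    exact eq_two_of_three_mul_add_ten_eq_four_pow hB hA
  · rintro rfl
    exact ⟨⟨1, 0, rfl⟩, 2, rfl⟩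
end

section
/- For any integer N ≡ 5 (mod 8), the number of representations N = x² + y² + 2z² + 8w² with (x,y,z,w) ∈ ℤ⁴ equals the number of representations N = x² + 4y² + 8z² + 8w² with (x,y,z,w) ∈ ℤ⁴, up to the factor 2 coming from switching x and y in the first form: #{(x,y,z,w) ∈ ℤ⁴ : N = x² + y² + 2z² + 8w²} = 2 · #{(x,y,z,w) ∈ ℤ⁴ : N = x² + 4y² + 8z² + 8w²}. -/
/-!
Since squares are `0` or `1` mod `4`, a representation `N = x² + y² + 2z² + 8w²` of a number
`N ≡ 1 (mod 4)` has `z` even and exactly one of `x, y` even. Writing the even ones as `2b` and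
`2c`, it is `N = a² + 4b² + 8c² + 8d²` with `a` the odd one of `x, y`, and the parity of `x`
records which of the two it was.
-/

open Set

def reps₁ (N : ℤ) : Set (ℤ × ℤ × ℤ × ℤ) :=
  {p | N = p.1 ^ 2 + p.2.1 ^ 2 + 2 * p.2.2.1 ^ 2 + 8 * p.2.2.2 ^ 2}

def reps₂ (N : ℤ) : Set (ℤ × ℤ × ℤ × ℤ) :=
  {p | N = p.1 ^ 2 + 4 * p.2.1 ^ 2 + 8 * p.2.2.1 ^ 2 + 8 * p.2.2.2 ^ 2}

def spread : Bool × (ℤ × ℤ × ℤ × ℤ) → ℤ × ℤ × ℤ × ℤ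
  | (true, (a, b, c, d)) => (a, 2 * b, 2 * c, d)
  | (false, (a, b, c, d)) => (2 * b, a, 2 * c, d)

lemma Int.sq_emod_four_eq_emod_two (x : ℤ) : x ^ 2 % 4 = x % 2 := by
  rcases Int.even_or_odd' x with ⟨k, rfl | rfl⟩ <;> ring_nf <;> omega

section

variable {N : ℤ}

lemma emod_two_eq_one_of_mem_reps₂ (hN : N % 2 = 1) {p : ℤ × ℤ × ℤ × ℤ} (hp : p ∈ reps₂ N) :
    p.1 % 2 = 1 := by
  have := Int.sq_emod_four_eq_emod_two p.1
  simp only [reps₂, mem_ofPred_eq] at hp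
  omega

lemma parity_of_mem_reps₁ (hN : N % 4 = 1) {x y z w : ℤ} (hp : (x, y, z, w) ∈ reps₁ N) :
    z % 2 = 0 ∧ (x % 2 = 1 ∧ y % 2 = 0 ∨ x % 2 = 0 ∧ y % 2 = 1) := by
  have := Int.sq_emod_four_eq_emod_two x
  have := Int.sq_emod_four_eq_emod_two y
  have := Int.sq_emod_four_eq_emod_two z
  simp only [reps₁, mem_ofPred_eq] at hp
  omega

lemma spread_mem_reps₁ {p : ℤ × ℤ × ℤ × ℤ} (hp : p ∈ reps₂ N) (t : Bool) :
    spread (t, p) ∈ reps₁ N := by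
  obtain ⟨a, b, c, d⟩ := p
  simp only [reps₂, mem_ofPred_eq] at hp
  cases t <;> simp only [spread, reps₁, mem_ofPred_eq] <;> linear_combination hp

lemma injOn_spread : InjOn spread (univ ×ˢ {p | p.1 % 2 = 1}) := by
  rintro ⟨t₁, a₁, b₁, c₁, d₁⟩ ⟨-, h₁⟩ ⟨t₂, a₂, b₂, c₂, d₂⟩ ⟨-, h₂⟩ heq
  simp only [mem_ofPred_eq] at h₁ h₂
  cases t₁ <;> cases t₂ <;>
    simp only [spread, Prod.mk.injEq, Bool.false_eq_true, Bool.true_eq_false, true_and,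
      false_and] at heq ⊢ <;> omega

lemma reps₁_subset_image_spread (hN : N % 4 = 1) : reps₁ N ⊆ spread '' (univ ×ˢ reps₂ N) := by
  rintro ⟨x, y, z, w⟩ hp
  obtain ⟨hz, hxy⟩ := parity_of_mem_reps₁ hN hp
  obtain ⟨c, rfl⟩ : ∃ c, z = 2 * c := ⟨z / 2, by omega⟩
  simp only [reps₁, mem_ofPred_eq] at hp
  rcases hxy with ⟨-, hy⟩ | ⟨hx, -⟩
  · obtain ⟨b, rfl⟩ : ∃ b, y = 2 * b := ⟨y / 2, by omega⟩
    refine ⟨(true, x, b, c, w), ⟨mem_univ _, ?_⟩, rfl⟩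
    simp only [reps₂, mem_ofPred_eq]
    linear_combination hp
  · obtain ⟨b, rfl⟩ : ∃ b, x = 2 * b := ⟨x / 2, by omega⟩
    refine ⟨(false, y, b, c, w), ⟨mem_univ _, ?_⟩, rfl⟩
    simp only [reps₂, mem_ofPred_eq]
    linear_combination hp

lemma image_spread (hN : N % 4 = 1) : spread '' (univ ×ˢ reps₂ N) = reps₁ N := by
  refine (reps₁_subset_image_spread hN).antisymm' ?_
  rintro _ ⟨⟨t, p⟩, ⟨-, hp⟩, rfl⟩
  exact spread_mem_reps₁ hp t

theorem ncard_reps₁_eq_two_mul_ncard_reps₂ (hN : N % 4 = 1) :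
    (reps₁ N).ncard = 2 * (reps₂ N).ncard := by
  have hinj : InjOn spread (univ ×ˢ reps₂ N) :=
    injOn_spread.mono (prod_mono subset_rfl fun _ => emod_two_eq_one_of_mem_reps₂ (by omega))
  rw [← image_spread hN, hinj.ncard_image, ncard_prod, ncard_univ, Nat.card_eq_fintype_card,
    Fintype.card_bool]

end

theorem stmt_3 (N : ℤ) (hN : N % 8 = 5) :
    {p : ℤ × ℤ × ℤ × ℤ | N = p.1^2 + p.2.1^2 + 2*p.2.2.1^2 + 8*p.2.2.2^2}.ncard =
      2 * {p : ℤ × ℤ × ℤ × ℤ | N = p.1^2 + 4*p.2.1^2 + 8*p.2.2.1^2 + 8*p.2.2.2^2}.ncard :=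
  ncard_reps₁_eq_two_mul_ncard_reps₂ (by omega)
end

section
/- For all integers c and odd integers t ≥ 3: gcd(c,2)² + gcd(c,2t)²·(t−5)/(4t) + gcd(c,t)²/t + gcd(c,4t)²/(4t) − 1 − gcd(c,4)²/4 ≥ 0. -/
/-!
Since `t` is odd, `gcd(c, 2t) = gcd(c, 2) gcd(c, t)` and `gcd(c, 4t) = gcd(c, 4) gcd(c, t)`.
With `g = gcd(c, t) ≥ 1`, the pair `(gcd(c, 2), gcd(c, 4))` is `(1, 1)`, `(2, 2)` or `(2, 4)`
according to `c mod 4`, and the expression collapses to `(g² - 1)/4`, `2 + g²(t - 3)/t` and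
`g² - 1` respectively, each nonnegative.
-/

theorem Int.gcd_mul_of_isCoprime (c : ℤ) {m n : ℤ} (h : IsCoprime m n) :
    Int.gcd c (m * n) = Int.gcd c m * Int.gcd c n := by
  rw [Int.gcd, Int.natAbs_mul]
  exact Nat.Coprime.gcd_mul _ (Int.isCoprime_iff_gcd_eq_one.mp h)

theorem Int.isCoprime_two_left_of_odd {t : ℤ} (ht : Odd t) : IsCoprime 2 t := by
  obtain ⟨k, rfl⟩ := ht
  exact ⟨-k, 1, by ring⟩

theorem Int.gcd_two_gcd_four_cases (c : ℤ) :
    (Int.gcd c 2 = 1 ∧ Int.gcd c 4 = 1) ∨ (Int.gcd c 2 = 2 ∧ Int.gcd c 4 = 2) ∨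
      (Int.gcd c 2 = 2 ∧ Int.gcd c 4 = 4) := by
  have h2 : Int.gcd c 2 = Int.gcd (c % 4) 2 := by
    rw [← Int.gcd_emod c, ← Int.gcd_emod (c % 4), Int.emod_emod_of_dvd c (by norm_num)]
  rw [h2, ← Int.gcd_emod c 4]
  have h0 : 0 ≤ c % 4 := Int.emod_nonneg c (by norm_num)
  have h4 : c % 4 < 4 := Int.emod_lt_of_pos c (by norm_num)
  interval_cases c % 4 <;> decide

theorem stmt_9 (c t : ℤ) (ht : 3 ≤ t) (hto : Odd t) :
    0 ≤ (Int.gcd c 2 : ℚ)^2 + (Int.gcd c (2*t) : ℚ)^2 * (t - 5) / (4*t)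
        + (Int.gcd c t : ℚ)^2 / t + (Int.gcd c (4*t) : ℚ)^2 / (4*t)
        - 1 - (Int.gcd c 4 : ℚ)^2 / 4 := by
  have h2 : IsCoprime 2 t := Int.isCoprime_two_left_of_odd hto
  have h4 : IsCoprime 4 t := by simpa using h2.pow_left (m := 2)
  rw [Int.gcd_mul_of_isCoprime c h2, Int.gcd_mul_of_isCoprime c h4]
  have hg : (1 : ℚ) ≤ Int.gcd c t := by
    exact_mod_cast Nat.one_le_iff_ne_zero.mpr (Int.gcd_ne_zero_right (by omega))
  have htq : (3 : ℚ) ≤ t := by exact_mod_cast ht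
  push_cast
  set g : ℚ := (Int.gcd c t : ℚ)
  rcases Int.gcd_two_gcd_four_cases c with ⟨ha, hb⟩ | ⟨ha, hb⟩ | ⟨ha, hb⟩ <;>
    rw [ha, hb] <;> push_cast
  · calc (0 : ℚ) ≤ (g ^ 2 - 1) / 4 := by nlinarith
      _ = _ := by field_simp; ring
  · calc (0 : ℚ) ≤ 2 + g ^ 2 * (t - 3) / t := by positivity
      _ = _ := by field_simp; ring
  · calc (0 : ℚ) ≤ g ^ 2 - 1 := by nlinarith
      _ = _ := by field_simp; ring
end

section
/- As formal power series in q, ∏_{n≥1} (1 − q^{2n})² / (1 − q^n) = ∑_{n≥0} q^{n(n+1)/2}. -/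
open PowerSeries Finset
noncomputable section
namespace GaussAux
abbrev R := PowerSeries ℤ
abbrev XX : R := PowerSeries.X
def qb : ℕ → ℕ → R
  | 0, 0 => 1
  | 0, _+1 => 0
  | n+1, 0 => qb n 0
  | n+1, a+1 => qb n (a+1) + XX^(n-a) * qb n a
lemma qb_zero_right (n : ℕ) : qb n 0 = 1 := by
  induction n with
  | zero => rfl
  | succ n ih => rw [qb, ih]
lemma qb_succ_succ (n a : ℕ) : qb (n+1) (a+1) = qb n (a+1) + XX^(n-a) * qb n a := rfl
lemma qb_eq_zero {n a : ℕ} (h : n < a) : qb n a = 0 := by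
  induction n generalizing a with
  | zero => match a, h with | a+1, _ => rfl
  | succ n ih =>
    match a, h with
    | a+1, h => rw [qb_succ_succ, ih (by omega), ih (by omega), mul_zero, add_zero]
lemma qb_pascal2 (n a : ℕ) : qb (n+1) (a+1) = XX^(a+1) * qb n (a+1) + qb n a := by
  induction n generalizing a with
  | zero =>
    cases a with
    | zero => simp [qb, qb_zero_right]
    | succ c => simp [qb_succ_succ, qb_eq_zero (by omega : (0:ℕ) < c+1),
        qb_eq_zero (by omega : (0:ℕ) < c+2)]
  | succ n ih =>
    cases a with
    | zero =>
      have L : qb (n+2) 1 = (XX^1 * qb n 1 + qb n 0) + XX^(n+1) * qb (n+1) 0 := by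
        rw [qb_succ_succ, ih 0]; norm_num
      have Rr : XX^(0+1) * qb (n+1) 1 + qb (n+1) 0
          = XX^1 * (qb n 1 + XX^n * qb n 0) + qb n 0 := by
        rw [qb_succ_succ, qb]
        norm_num
      rw [L, Rr]
      simp [qb_zero_right]
      ring
    | succ c =>
      by_cases hc : c ≤ n
      · have L : qb (n+2) (c+2) = ((XX^(c+2) * qb n (c+2) + qb n (c+1))
            + XX^(n-c) * (XX^(c+1) * qb n (c+1) + qb n c)) := by
          rw [qb_succ_succ, ih (c+1), ih c]; norm_num [Nat.succ_sub_succ]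
        have Rr : XX^(c+1+1) * qb (n+1) (c+1+1) + qb (n+1) (c+1)
            = XX^(c+2) * (qb n (c+2) + XX^(n-(c+1)) * qb n (c+1))
              + (qb n (c+1) + XX^(n-c) * qb n c) := by
          rw [qb_succ_succ, qb_succ_succ]
        rw [L, Rr]
        rcases Nat.lt_or_ge c n with h | h
        · have h1 : n - c = (n-(c+1)) + 1 := by omega
          rw [h1]; ring
        · have hcn : c = n := by omega
          subst hcn
          rw [qb_eq_zero (show c < c+1 by omega), qb_eq_zero (show c < c+2 by omega)]
          ring
      · rw [qb_eq_zero (show n+1 < c+1+1 by omega), qb_eq_zero (show n+1+1 < c+1+1 by omega),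
          qb_eq_zero (show n+1 < c+1 by omega)]
        simp

lemma qb_self (n : ℕ) : qb n n = 1 := by
  induction n with
  | zero => rfl
  | succ n ih => rw [qb_pascal2, qb_eq_zero (by omega), mul_zero, zero_add, ih]

lemma qb_symm {n a : ℕ} (h : a ≤ n) : qb n (n-a) = qb n a := by
  induction n generalizing a with
  | zero => interval_cases a; rfl
  | succ n ih =>
    cases a with
    | zero => rw [Nat.sub_zero, qb_self, qb_zero_right]
    | succ c =>
      rcases Nat.lt_or_ge c n with hc | hc
      · have e : n + 1 - (c+1) = (n - (c+1)) + 1 := by omega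
        rw [e, qb_succ_succ, qb_pascal2]
        rw [show n - (c+1) + 1 = n - c from by omega,
          show n - (n - (c+1)) = c+1 from by omega]
        rw [ih (show c ≤ n by omega), ih (show c+1 ≤ n by omega)]
        ring
      · have hcn : c = n := by omega
        subst hcn
        simp [qb_self, qb_zero_right]

lemma qb_vandermonde (m : ℕ) : ∀ n r, qb (m+n) r
    = ∑ j ∈ Finset.range (r+1), qb m j * qb n (r-j) * XX^((m-j)*(r-j)) := by
  intro n
  induction n with
  | zero =>
    intro r
    rw [Finset.sum_eq_single r]
    · rw [Nat.sub_self, qb_zero_right, mul_one, Nat.mul_zero, pow_zero, mul_one, Nat.add_zero]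
    · intro j hj hne
      have : 0 < r - j := by simp at hj; omega
      rw [qb_eq_zero this, mul_zero, zero_mul]
    · intro h; exact absurd (Finset.self_mem_range_succ r) h
  | succ n ih =>
    intro r
    cases r with
    | zero => simp [qb_zero_right]
    | succ s =>
      have split : ∀ j ∈ Finset.range (s+1),
          qb m j * qb (n+1) (s+1-j) * XX^((m-j)*(s+1-j))
          = qb m j * qb n (s+1-j) * XX^((m-j)*(s+1-j))
            + XX^((m+n)-s) * (qb m j * qb n (s-j) * XX^((m-j)*(s-j))) := by
        intro j hj
        simp only [Finset.mem_range] at hj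
        have hjs : j ≤ s := by omega
        by_cases h1 : j ≤ m ∧ s - j ≤ n
        · have e : s+1-j = (s-j)+1 := by omega
          have e2 : (m-j)*((s-j)+1) = (m-j)*(s-j) + (m-j) := Nat.mul_succ _ _
          have key : n-(s-j) + (m-j)*((s-j)+1) = ((m+n)-s) + (m-j)*(s-j) := by
            rw [e2]
            generalize (m-j)*(s-j) = p
            omega
          have merge : XX^(n-(s-j)) * XX^((m-j)*((s-j)+1))
              = XX^((m+n)-s) * XX^((m-j)*(s-j)) := by
            rw [← pow_add, ← pow_add, key]
          rw [e, qb_succ_succ]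
          calc qb m j * (qb n (s-j+1) + XX^(n-(s-j)) * qb n (s-j)) * XX^((m-j)*(s-j+1))
              = qb m j * qb n (s-j+1) * XX^((m-j)*(s-j+1))
                + qb m j * qb n (s-j) * (XX^(n-(s-j)) * XX^((m-j)*((s-j)+1))) := by ring
            _ = _ := by rw [merge]; ring
        · rw [not_and_or] at h1
          rcases h1 with h1 | h1
          · simp [qb_eq_zero (show m < j by omega)]
          · have e : s+1-j = (s-j)+1 := by omega
            rw [e, qb_eq_zero (show n < s - j by omega),
              qb_eq_zero (show n < (s-j)+1 by omega),
              qb_eq_zero (show n+1 < (s-j)+1 by omega)]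
            simp
      calc qb (m+(n+1)) (s+1)
          = qb (m+n) (s+1) + XX^((m+n)-s) * qb (m+n) s := by
            rw [show m+(n+1) = (m+n)+1 from rfl, qb_succ_succ]
        _ = ((∑ j ∈ Finset.range (s+1), qb m j * qb n (s+1-j) * XX^((m-j)*(s+1-j)))
              + qb m (s+1) * qb n (s+1-(s+1)) * XX^((m-(s+1))*(s+1-(s+1))))
            + XX^((m+n)-s) * ∑ j ∈ Finset.range (s+1), qb m j * qb n (s-j) * XX^((m-j)*(s-j)) := by
            rw [ih (s+1), ih s, Finset.sum_range_succ]
        _ = (∑ j ∈ Finset.range (s+1), (qb m j * qb n (s+1-j) * XX^((m-j)*(s+1-j))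
              + XX^((m+n)-s) * (qb m j * qb n (s-j) * XX^((m-j)*(s-j)))))
            + qb m (s+1) * qb n (s+1-(s+1)) * XX^((m-(s+1))*(s+1-(s+1))) := by
            rw [Finset.sum_add_distrib, Finset.mul_sum]; ring
        _ = (∑ j ∈ Finset.range (s+1), qb m j * qb (n+1) (s+1-j) * XX^((m-j)*(s+1-j)))
            + qb m (s+1) * qb (n+1) (s+1-(s+1)) * XX^((m-(s+1))*(s+1-(s+1))) := by
            rw [Finset.sum_congr rfl split, Nat.sub_self, qb_zero_right, qb_zero_right]
        _ = _ := (Finset.sum_range_succ _ _).symm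

def T (k : ℕ) : ℕ := k*(k+1)/2
def C2 (b : ℕ) : ℕ := b*(b-1)/2

lemma T_succ (c : ℕ) : T (c+1) = T c + (c+1) := by
  unfold T
  rw [show (c+1)*(c+1+1) = c*(c+1) + 2*(c+1) from by ring,
    Nat.add_mul_div_left _ _ (by norm_num : (0:ℕ) < 2)]

lemma C2_succ (c : ℕ) : C2 (c+1) = C2 c + c := by
  unfold C2
  cases c with
  | zero => rfl
  | succ d =>
    rw [Nat.add_sub_cancel, Nat.add_sub_cancel,
      show (d+1+1)*(d+1) = (d+1)*d + 2*(d+1) from by ring,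
      Nat.add_mul_div_left _ _ (by norm_num : (0:ℕ) < 2)]

def pq (k : ℕ) : R := ∏ j ∈ Finset.range k, (1 - XX^(j+1))
def pe (k : ℕ) : R := ∏ j ∈ Finset.range k, (1 - XX^(2*(j+1)))

lemma pq_succ (k : ℕ) : pq (k+1) = pq k * (1 - XX^(k+1)) := Finset.prod_range_succ _ _

lemma Q0 : ∀ n a, a ≤ n → qb n a * pq a * pq (n-a) = pq n := by
  intro n
  induction n with
  | zero => intro a ha; interval_cases a; simp [qb, pq]
  | succ n ih =>
    intro a ha
    cases a with
    | zero => simp [qb_zero_right, pq]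
    | succ c =>
      rcases Nat.lt_or_ge c n with hc | hc
      · obtain ⟨d, rfl⟩ : ∃ d, n = c + 1 + d := ⟨n - (c+1), by omega⟩
        have h1 := ih (c+1) (by omega)
        have h2 := ih c (by omega)
        rw [show c+1+d-(c+1) = d from by omega] at h1
        rw [show c+1+d-c = d+1 from by omega] at h2
        rw [qb_pascal2, show c+1+d+1-(c+1) = d+1 from by omega, pq_succ d, pq_succ c,
          pq_succ (c+1+d)]
        rw [pq_succ c] at h1
        rw [pq_succ d] at h2
        linear_combination (XX^(c+1) * (1 - XX^(d+1))) * h1 + (1 - XX^(c+1)) * h2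
      · have hcn : c = n := by omega
        subst hcn
        rw [qb_self, Nat.sub_self, one_mul]
        simp [pq]

lemma Ssum_eq (N : ℕ) :
    ∑ a ∈ Finset.range (N+1), qb N a * XX^(T a) = ∏ j ∈ Finset.range N, (1 + XX^(j+1)) := by
  induction N with
  | zero => simp [qb, T]
  | succ N ih =>
    rw [Finset.sum_range_succ']
    have step : ∀ c ∈ Finset.range (N+1), qb (N+1) (c+1) * XX^(T (c+1))
        = qb N (c+1) * XX^(T (c+1)) + XX^(N+1) * (qb N c * XX^(T c)) := by
      intro c hc
      simp only [Finset.mem_range] at hc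
      rw [qb_succ_succ, add_mul]
      congr 1
      have key : XX^(N-c) * XX^(T (c+1)) = XX^(N+1) * XX^(T c) := by
        rw [← pow_add, ← pow_add]
        congr 1
        rw [T_succ]; omega
      calc XX^(N-c) * qb N c * XX^(T (c+1)) = qb N c * (XX^(N-c) * XX^(T (c+1))) := by ring
        _ = qb N c * (XX^(N+1) * XX^(T c)) := by rw [key]
        _ = XX^(N+1) * (qb N c * XX^(T c)) := by ring
    rw [Finset.sum_congr rfl step, Finset.sum_add_distrib, Finset.prod_range_succ]
    have r1 : (∑ c ∈ Finset.range (N+1), qb N (c+1) * XX^(T (c+1))) + qb (N+1) 0 * XX^(T 0)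
        = ∑ a ∈ Finset.range (N+1), qb N a * XX^(T a) := by
      have h0 : qb (N+1) 0 * XX^(T 0) = qb N 0 * XX^(T 0) := by
        rw [qb_zero_right, qb_zero_right]
      rw [h0, ← Finset.sum_range_succ' (fun a => qb N a * XX^(T a)) (N+1),
        Finset.sum_range_succ _ (N+1), qb_eq_zero (show N < N+1 by omega), zero_mul, add_zero]
    have r2 : ∑ c ∈ Finset.range (N+1), XX^(N+1) * (qb N c * XX^(T c))
        = XX^(N+1) * ∑ a ∈ Finset.range (N+1), qb N a * XX^(T a) := (Finset.mul_sum _ _ _).symm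
    linear_combination r1 + r2 + (1 + XX^(N+1)) * ih

lemma Usum_eq (N : ℕ) :
    ∑ b ∈ Finset.range (N+1), qb N b * XX^(C2 b) = ∏ j ∈ Finset.range N, (1 + XX^j) := by
  induction N with
  | zero => simp [qb, C2]
  | succ N ih =>
    rw [Finset.sum_range_succ']
    have step : ∀ c ∈ Finset.range (N+1), qb (N+1) (c+1) * XX^(C2 (c+1))
        = qb N (c+1) * XX^(C2 (c+1)) + XX^N * (qb N c * XX^(C2 c)) := by
      intro c hc
      simp only [Finset.mem_range] at hc
      rw [qb_succ_succ, add_mul]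
      congr 1
      have key : XX^(N-c) * XX^(C2 (c+1)) = XX^N * XX^(C2 c) := by
        rw [← pow_add, ← pow_add]
        congr 1
        rw [C2_succ]; omega
      calc XX^(N-c) * qb N c * XX^(C2 (c+1)) = qb N c * (XX^(N-c) * XX^(C2 (c+1))) := by ring
        _ = qb N c * (XX^N * XX^(C2 c)) := by rw [key]
        _ = XX^N * (qb N c * XX^(C2 c)) := by ring
    rw [Finset.sum_congr rfl step, Finset.sum_add_distrib, Finset.prod_range_succ]
    have r1 : (∑ c ∈ Finset.range (N+1), qb N (c+1) * XX^(C2 (c+1))) + qb (N+1) 0 * XX^(C2 0)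
        = ∑ a ∈ Finset.range (N+1), qb N a * XX^(C2 a) := by
      have h0 : qb (N+1) 0 * XX^(C2 0) = qb N 0 * XX^(C2 0) := by
        rw [qb_zero_right, qb_zero_right]
      rw [h0, ← Finset.sum_range_succ' (fun a => qb N a * XX^(C2 a)) (N+1),
        Finset.sum_range_succ _ (N+1), qb_eq_zero (show N < N+1 by omega), zero_mul, add_zero]
    have r2 : ∑ c ∈ Finset.range (N+1), XX^N * (qb N c * XX^(C2 c))
        = XX^N * ∑ a ∈ Finset.range (N+1), qb N a * XX^(C2 a) := (Finset.mul_sum _ _ _).symm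
    linear_combination r1 + r2 + (1 + XX^N) * ih

/-- exponent of X at position r in the bilateral sum (center N) -/
def ee (N r : ℕ) : ℕ := if N ≤ r then T (r - N) else T (N - r - 1)

lemma two_mul_T (x : ℕ) : 2 * T x = x*(x+1) :=
  Nat.mul_div_cancel' (Nat.even_mul_succ_self x).two_dvd

lemma two_mul_C2 (x : ℕ) : 2 * C2 x = x*(x-1) := by
  cases x with
  | zero => rfl
  | succ u =>
    have : Even ((u+1)*u) := by rw [mul_comm]; exact Nat.even_mul_succ_self u
    unfold C2
    rw [Nat.add_sub_cancel]
    exact Nat.mul_div_cancel' this.two_dvd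

lemma expo {N a b : ℕ} (ha : a ≤ N) (hb : b ≤ N) : T a + C2 b = a*b + ee N (N+a-b) := by
  unfold ee
  rcases le_or_gt b a with h | h
  · rw [if_pos (show N ≤ N+a-b by omega), show N + a - b - N = a - b from by omega]
    obtain ⟨d, rfl⟩ : ∃ d, a = b + d := ⟨a-b, by omega⟩
    rw [show b + d - b = d from by omega]
    refine Nat.eq_of_mul_eq_mul_left (show 0 < 2 by norm_num) ?_
    rw [Nat.mul_add, Nat.mul_add, two_mul_T, two_mul_C2, two_mul_T]
    cases b with
    | zero => simp
    | succ u => rw [Nat.add_sub_cancel]; ring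
  · rw [if_neg (show ¬ N ≤ N+a-b by omega), show N - (N+a-b) - 1 = b - a - 1 from by omega]
    obtain ⟨d, rfl⟩ : ∃ d, b = a + 1 + d := ⟨b-a-1, by omega⟩
    rw [show a+1+d - a - 1 = d from by omega]
    refine Nat.eq_of_mul_eq_mul_left (show 0 < 2 by norm_num) ?_
    rw [Nat.mul_add, Nat.mul_add, two_mul_T, two_mul_C2, two_mul_T]
    rw [show a+1+d-1 = a+d from by omega]
    ring

lemma jtp (N : ℕ) :
    ∑ r ∈ Finset.range (2*N+1), qb (2*N) r * XX^(ee N r)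
    = (∏ j ∈ Finset.range N, (1 + XX^(j+1))) * (∏ j ∈ Finset.range N, (1 + XX^j)) := by
  rw [← Ssum_eq, ← Usum_eq, Finset.sum_mul_sum, ← Finset.sum_product']
  calc ∑ r ∈ Finset.range (2*N+1), qb (2*N) r * XX^(ee N r)
      = ∑ r ∈ Finset.range (2*N+1), ∑ j ∈ Finset.range (r+1),
          (qb N j * qb N (r-j) * XX^((N-j)*(r-j))) * XX^(ee N r) := by
        refine Finset.sum_congr rfl fun r _ => ?_
        rw [show 2*N = N+N from two_mul N, qb_vandermonde, Finset.sum_mul]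
    _ = ∑ x ∈ (Finset.range (2*N+1)).sigma (fun r => Finset.range (r+1)),
          (qb N x.2 * qb N (x.1-x.2) * XX^((N-x.2)*(x.1-x.2))) * XX^(ee N x.1) :=
        Finset.sum_sigma' _ _ _
    _ = ∑ x ∈ ((Finset.range (2*N+1)).sigma (fun r => Finset.range (r+1))).filter
            (fun x => x.2 ≤ N ∧ x.1 - x.2 ≤ N),
          (qb N x.2 * qb N (x.1-x.2) * XX^((N-x.2)*(x.1-x.2))) * XX^(ee N x.1) := by
        refine (Finset.sum_filter_of_ne ?_).symm
        intro x hx hne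
        by_contra hp
        rw [not_and_or] at hp
        rcases hp with hp | hp
        · exact hne (by rw [qb_eq_zero (show N < x.2 by omega)]; ring)
        · exact hne (by rw [qb_eq_zero (show N < x.1 - x.2 by omega)]; ring)
    _ = ∑ p ∈ Finset.range (N+1) ×ˢ Finset.range (N+1),
          (qb N p.1 * XX^(T p.1)) * (qb N p.2 * XX^(C2 p.2)) := by
        refine Finset.sum_bij' (fun x _ => ((x.1 - x.2 : ℕ), (N - x.2 : ℕ)))
          (fun p _ => ⟨N + p.1 - p.2, N - p.2⟩) ?_ ?_ ?_ ?_ ?_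
        · intro x hx
          simp only [Finset.mem_filter, Finset.mem_sigma, Finset.mem_range] at hx
          simp only [Finset.mem_product, Finset.mem_range]
          omega
        · intro p hp
          simp only [Finset.mem_product, Finset.mem_range] at hp
          simp only [Finset.mem_filter, Finset.mem_sigma, Finset.mem_range]
          omega
        · intro x hx
          simp only [Finset.mem_filter, Finset.mem_sigma, Finset.mem_range] at hx
          ext <;> simp <;> omega
        · intro p hp
          simp only [Finset.mem_product, Finset.mem_range] at hp
          ext <;> simp <;> omega
        · intro x hx
          simp only [Finset.mem_filter, Finset.mem_sigma, Finset.mem_range] at hx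
          obtain ⟨⟨hr, hj⟩, hjN, hrjN⟩ := hx
          have h1 : qb N (N - x.2) = qb N x.2 := by
            have h0 := qb_symm (show N - x.2 ≤ N by omega)
            rw [show N-(N-x.2) = x.2 from by omega] at h0
            exact h0.symm
          have h2 : (N-x.2)*(x.1-x.2) + ee N x.1 = T (x.1-x.2) + C2 (N-x.2) := by
            have h3 := expo (show x.1-x.2 ≤ N from hrjN) (show N-x.2 ≤ N by omega)
            rw [show N+(x.1-x.2)-(N-x.2) = x.1 from by omega, mul_comm] at h3
            exact h3.symm
          calc (qb N x.2 * qb N (x.1-x.2) * XX^((N-x.2)*(x.1-x.2))) * XX^(ee N x.1)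
              = qb N x.2 * qb N (x.1-x.2) * (XX^((N-x.2)*(x.1-x.2)) * XX^(ee N x.1)) := by
                ring
            _ = qb N x.2 * qb N (x.1-x.2) * (XX^(T (x.1-x.2)) * XX^(C2 (N-x.2))) := by
                rw [← pow_add, ← pow_add, h2]
            _ = (qb N (x.1-x.2) * XX^(T (x.1-x.2))) * (qb N (N-x.2) * XX^(C2 (N-x.2))) := by
                rw [h1]; ring

/-- congruence mod X^M -/
def Em (M : ℕ) (f g : R) : Prop := ∀ m, m < M → PowerSeries.coeff m f = PowerSeries.coeff m g

lemma Em_refl (M : ℕ) (f : R) : Em M f f := fun _ _ => rfl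

lemma Em_mul {M : ℕ} {f g h k : R} (h1 : Em M f g) (h2 : Em M h k) : Em M (f*h) (g*k) := by
  intro m hm
  rw [PowerSeries.coeff_mul, PowerSeries.coeff_mul]
  refine Finset.sum_congr rfl fun p hp => ?_
  rw [Finset.HasAntidiagonal.mem_antidiagonal] at hp
  rw [h1 p.1 (by omega), h2 p.2 (by omega)]

lemma Em_one_sub_pow {M e : ℕ} (he : M ≤ e) : Em M (1 - XX^e) 1 := by
  intro m hm
  rw [map_sub, PowerSeries.coeff_X_pow, if_neg (by omega), sub_zero]

lemma Em_Xpow_mul_zero {M t : ℕ} (f : R) (ht : M ≤ t) : Em M (XX^t * f) 0 := by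
  intro m hm
  rw [map_zero, PowerSeries.coeff_mul]
  refine Finset.sum_eq_zero fun p hp => ?_
  rw [Finset.HasAntidiagonal.mem_antidiagonal] at hp
  rw [PowerSeries.coeff_X_pow, if_neg (by omega), zero_mul]

lemma Em_pq {M K : ℕ} (hK : M ≤ K) : ∀ L, K ≤ L → Em M (pq L) (pq K) := by
  intro L
  induction L with
  | zero => intro h; rw [Nat.le_zero.mp h]; exact Em_refl _ _
  | succ L ih =>
    intro h
    rcases Nat.eq_or_lt_of_le h with he | hl
    · rw [he]; exact Em_refl _ _
    · have h2 : Em M (pq L * (1 - XX^(L+1))) (pq K * 1) := Em_mul (ih (by omega))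
        (Em_one_sub_pow (by omega))
      rw [mul_one] at h2
      rw [pq_succ]
      exact h2

lemma pe_succ (k : ℕ) : pe (k+1) = pe k * (1 - XX^(2*(k+1))) := Finset.prod_range_succ _ _

lemma Em_pe {M K : ℕ} (hK : M ≤ K) : ∀ L, K ≤ L → Em M (pe L) (pe K) := by
  intro L
  induction L with
  | zero => intro h; rw [Nat.le_zero.mp h]; exact Em_refl _ _
  | succ L ih =>
    intro h
    rcases Nat.eq_or_lt_of_le h with he | hl
    · rw [he]; exact Em_refl _ _
    · have h2 : Em M (pe L * (1 - XX^(2*(L+1)))) (pe K * 1) := Em_mul (ih (by omega))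
        (Em_one_sub_pow (by omega))
      rw [mul_one] at h2
      rw [pe_succ]
      exact h2

lemma pq_constantCoeff (k : ℕ) : PowerSeries.constantCoeff (pq k) = 1 := by
  unfold pq
  rw [map_prod]
  refine Finset.prod_eq_one fun j _ => ?_
  rw [map_sub, map_one, map_pow, PowerSeries.constantCoeff_X]
  simp

lemma pq_mul_inv (k : ℕ) : pq k * PowerSeries.invOfUnit (pq k) 1 = 1 :=
  PowerSeries.mul_invOfUnit _ _ (by rw [pq_constantCoeff]; rfl)

lemma Em_cancel {M : ℕ} {f g u v : R} (huv : u * v = 1) (h : Em M (f * u) (g * u)) :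
    Em M f g := by
  have h2 : Em M (f * u * v) (g * u * v) := Em_mul h (Em_refl M v)
  rw [mul_assoc, huv, mul_one, mul_assoc, huv, mul_one] at h2
  exact h2

lemma Em_qb_pq {M n a K : ℕ} (haM : M ≤ a) (hnaM : M ≤ n - a) (han : a ≤ n) (hK : M ≤ K) :
    Em M (qb n a * pq K) 1 := by
  have q0 := Q0 n a han
  have e1 : Em M (qb n a * pq a * pq (n-a)) (qb n a * pq M * pq M) :=
    Em_mul (Em_mul (Em_refl _ _) (Em_pq le_rfl a haM)) (Em_pq le_rfl (n-a) hnaM)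
  have e2 : Em M (qb n a * pq M * pq M) (1 * pq M) := by
    rw [one_mul]
    intro m hm
    rw [← e1 m hm, q0]
    exact (Em_pq le_rfl n (by omega)) m hm
  have e3 : Em M (qb n a * pq M) 1 := Em_cancel (pq_mul_inv M) e2
  have e4 : Em M (qb n a * pq K) (qb n a * pq M) := Em_mul (Em_refl _ _) (Em_pq le_rfl K hK)
  exact fun m hm => (e4 m hm).trans (e3 m hm)

lemma T_strictMono : StrictMono T :=
  strictMono_nat_of_lt_succ fun n => by rw [T_succ]; omega

lemma T_le_self (k : ℕ) : k ≤ T k := by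
  induction k with
  | zero => simp [T]
  | succ c ih => rw [T_succ]; omega

open scoped Classical in
noncomputable def Th : R := PowerSeries.mk fun m : ℕ => if ∃ k : ℕ, k*(k+1)/2 = m then (1:ℤ) else 0

open scoped Classical in
lemma theta_count {M N : ℕ} (hMN : M + 1 ≤ N) :
    Em M (∑ r ∈ Finset.range (2*N+1), XX^(ee N r)) (Th + Th) := by
  intro m hm
  rw [map_sum, map_add]
  unfold Th
  rw [PowerSeries.coeff_mk]
  by_cases hex : ∃ k : ℕ, k*(k+1)/2 = m
  · obtain ⟨k, hk⟩ := hex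
    replace hk : T k = m := hk
    have hkM : k < M := by have := T_le_self k; omega
    have e1 : ee N (N+k) = T k := by
      unfold ee; rw [if_pos (by omega)]; congr 1; omega
    have e2 : ee N (N-(k+1)) = T k := by
      unfold ee; rw [if_neg (by omega)]; congr 1; omega
    have hne : N + k ≠ N - (k+1) := by omega
    have key : ∀ r ∈ Finset.range (2*N+1), (PowerSeries.coeff m) (XX^(ee N r))
        = (if r = N + k then (1:ℤ) else 0) + (if r = N - (k+1) then (1:ℤ) else 0) := by
      intro r hr
      rw [Finset.mem_range] at hr
      rw [PowerSeries.coeff_X_pow]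
      by_cases h1 : r = N + k
      · subst h1
        rw [if_pos (by rw [e1, hk]), if_pos rfl, if_neg hne]
        norm_num
      · by_cases h2 : r = N - (k+1)
        · subst h2
          rw [if_pos (by rw [e2, hk]), if_neg h1, if_pos rfl]
          norm_num
        · rw [if_neg, if_neg h1, if_neg h2]
          · norm_num
          · intro hcon
            unfold ee at hcon
            split at hcon
            · exact h1 (by have := T_strictMono.injective (hk.trans hcon).symm; omega)
            · exact h2 (by have := T_strictMono.injective (hk.trans hcon).symm; omega)
    rw [Finset.sum_congr rfl key, Finset.sum_add_distrib,
      Finset.sum_ite_eq' (Finset.range (2*N+1)) (N+k) (fun _ => (1:ℤ)),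
      Finset.sum_ite_eq' (Finset.range (2*N+1)) (N-(k+1)) (fun _ => (1:ℤ)),
      if_pos (Finset.mem_range.mpr (by omega)), if_pos (Finset.mem_range.mpr (by omega)),
      if_pos ⟨k, hk⟩]
  · have key : ∀ r ∈ Finset.range (2*N+1), (PowerSeries.coeff m) (XX^(ee N r)) = 0 := by
      intro r hr
      rw [PowerSeries.coeff_X_pow, if_neg]
      intro hcon
      apply hex
      unfold ee at hcon
      split at hcon
      · exact ⟨r - N, hcon.symm⟩
      · exact ⟨N - r - 1, hcon.symm⟩
    rw [Finset.sum_congr rfl key, Finset.sum_const_zero, if_neg hex]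
    norm_num

lemma ee_lb (N r : ℕ) : r - N ≤ ee N r ∧ N - r - 1 ≤ ee N r := by
  unfold ee
  split
  · exact ⟨T_le_self _, by omega⟩
  · exact ⟨by omega, T_le_self _⟩

lemma core (M : ℕ) : Em M (Th * pq M) (pe M * pe M) := by
  set N := 2*M+1 with hN
  have pair : ∀ (L : ℕ), (∏ j ∈ Finset.range L, (1 + XX^(j+1))) * pq L = pe L := by
    intro L
    unfold pq pe
    rw [← Finset.prod_mul_distrib]
    refine Finset.prod_congr rfl fun j _ => ?_
    have hxx : XX^(j+1) * XX^(j+1) = XX^(2*(j+1)) := by rw [← pow_add]; congr 1; omega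
    calc (1 + XX^(j+1)) * (1 - XX^(j+1)) = 1 - XX^(j+1)*XX^(j+1) := by ring
      _ = 1 - XX^(2*(j+1)) := by rw [hxx]
  have peel : (∏ j ∈ Finset.range N, (1 + XX^j))
      = (∏ j ∈ Finset.range (2*M), (1 + XX^(j+1))) * (1 + XX^0) :=
    Finset.prod_range_succ' (fun j => (1 + XX^j)) (2*M)
  have prodside : (∏ j ∈ Finset.range N, (1 + XX^(j+1))) * (∏ j ∈ Finset.range N, (1 + XX^j))
        * (pq N * pq (2*M))
      = pe N * pe (2*M) + pe N * pe (2*M) := by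
    rw [peel]
    calc (∏ j ∈ Finset.range N, (1 + XX^(j+1)))
          * ((∏ j ∈ Finset.range (2*M), (1 + XX^(j+1))) * (1 + XX^0)) * (pq N * pq (2*M))
        = ((∏ j ∈ Finset.range N, (1 + XX^(j+1))) * pq N)
          * ((∏ j ∈ Finset.range (2*M), (1 + XX^(j+1))) * pq (2*M)) * (1 + XX^0) := by ring
      _ = pe N * pe (2*M) * (1 + XX^0) := by rw [pair N, pair (2*M)]
      _ = _ := by rw [pow_zero]; ring
  have step1 : Em M (∑ r ∈ Finset.range (2*N+1), qb (2*N) r * XX^(ee N r) * (pq N * pq (2*M)))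
      (∑ r ∈ Finset.range (2*N+1), XX^(ee N r) * pq (2*M)) := by
    intro m hm
    rw [map_sum, map_sum]
    refine Finset.sum_congr rfl fun r hr => ?_
    rw [Finset.mem_range] at hr
    by_cases hee : ee N r < M
    · have hlb := ee_lb N r
      have h5 : Em M (qb (2*N) r * pq N) 1 :=
        Em_qb_pq (by omega) (by omega) (by omega) (by omega)
      have h6 : Em M (qb (2*N) r * XX^(ee N r) * (pq N * pq (2*M)))
          (1 * (XX^(ee N r) * pq (2*M))) := by
        have e : qb (2*N) r * XX^(ee N r) * (pq N * pq (2*M))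
            = (qb (2*N) r * pq N) * (XX^(ee N r) * pq (2*M)) := by ring
        rw [e]
        exact Em_mul h5 (Em_refl _ _)
      rw [one_mul] at h6
      exact h6 m hm
    · have z1 : Em M (qb (2*N) r * XX^(ee N r) * (pq N * pq (2*M))) 0 := by
        have e : qb (2*N) r * XX^(ee N r) * (pq N * pq (2*M))
            = XX^(ee N r) * (qb (2*N) r * (pq N * pq (2*M))) := by ring
        rw [e]
        exact Em_Xpow_mul_zero _ (by omega)
      have z2 : Em M (XX^(ee N r) * pq (2*M)) 0 := Em_Xpow_mul_zero _ (by omega)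
      rw [z1 m hm, z2 m hm]
  have sumside : Em M ((∑ r ∈ Finset.range (2*N+1), qb (2*N) r * XX^(ee N r)) * (pq N * pq (2*M)))
      ((Th + Th) * pq (2*M)) := by
    intro m hm
    rw [Finset.sum_mul]
    rw [step1 m hm, ← Finset.sum_mul]
    exact (Em_mul (theta_count (by omega)) (Em_refl M (pq (2*M)))) m hm
  have final2 : Em M ((Th + Th) * pq (2*M)) (pe N * pe (2*M) + pe N * pe (2*M)) := by
    intro m hm
    rw [← sumside m hm, jtp N, prodside]
  have half : Em M (Th * pq (2*M)) (pe N * pe (2*M)) := by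
    intro m hm
    have h9 := final2 m hm
    rw [add_mul, map_add, map_add] at h9
    omega
  have l1 : Em M (Th * pq M) (Th * pq (2*M)) :=
    Em_mul (Em_refl _ _) (fun m hm => ((Em_pq le_rfl (2*M) (by omega)) m hm).symm)
  have l2 : Em M (pe N * pe (2*M)) (pe M * pe M) :=
    Em_mul (Em_pe le_rfl N (by omega)) (Em_pe le_rfl (2*M) (by omega))
  exact fun m hm => ((l1 m hm).trans (half m hm)).trans (l2 m hm)
end GaussAux

open scoped Classical in
theorem stmt_19 : ∀ N : ℕ,
    PowerSeries.trunc N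
        ((PowerSeries.mk fun m : ℕ => if ∃ k : ℕ, k*(k+1)/2 = m then (1:ℤ) else 0) *
          ∏ n ∈ Finset.range N, (1 - (PowerSeries.X : PowerSeries ℤ)^(n+1)))
      = PowerSeries.trunc N
          (∏ n ∈ Finset.range N, (1 - (PowerSeries.X : PowerSeries ℤ)^(2*(n+1)))^2) := by
  intro M
  have hcore := GaussAux.core M
  have hsq : ∏ n ∈ Finset.range M, (1 - (PowerSeries.X : PowerSeries ℤ)^(2*(n+1)))^2
      = GaussAux.pe M * GaussAux.pe M := by
    rw [Finset.prod_pow, sq]; rfl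
  apply Polynomial.ext
  intro n
  rw [PowerSeries.coeff_trunc, PowerSeries.coeff_trunc]
  split
  · next h => rw [hsq]; exact hcore n h
  · rfl
end
end
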